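/- arXiv:2409.08535 — 5 statements merged into one kernel-verified Lean document; each statement's English description precedes it below -/
import Mathlib

section
/- For all integers N ≥ 8, we have 3^N · C(N+2, N) ≤ C(2N+6, N). -/
/-!
Induction on `N` from the base case `N = 8`. Passing from `N` to `N + 1` multiplies the
left side by `3 (N + 3) / (N + 1)` and the right side by `(2N + 8)(2N + 7) / ((N + 1)(N + 7))`,
so the step reduces to `3 (N + 3)(N + 7) ≤ (2N + 8)(2N + 7)`, i.e. `7 ≤ N ^ 2`.
-/

theorem Nat.add_one_mul_add_one_mul_choose_add_two (k m : ℕ) :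
    (k + 1) * (m + 1) * (k + m + 2).choose (k + 1)
      = (k + m + 2) * (k + m + 1) * (k + m).choose k := by
  have hk := Nat.add_one_mul_choose_eq (k + m + 1) k
  have hm := Nat.choose_mul_succ_eq (k + m) k
  rw [show k + m + 1 - k = m + 1 by omega] at hm
  calc (k + 1) * (m + 1) * (k + m + 2).choose (k + 1)
      = (m + 1) * ((k + m + 2) * (k + m + 1).choose k) := by rw [hk]; ring
    _ = (k + m + 2) * ((k + m).choose k * (k + m + 1)) := by rw [hm]; ring
    _ = (k + m + 2) * (k + m + 1) * (k + m).choose k := by ring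

theorem stmt_0 (N : ℕ) (hN : 8 ≤ N) :
    3 ^ N * Nat.choose (N + 2) N ≤ Nat.choose (2 * N + 6) N := by
  induction N, hN using Nat.le_induction with
  | base => decide
  | succ N hN ih =>
    have hsmall := Nat.add_one_mul_choose_eq (N + 2) N
    have hlarge := Nat.add_one_mul_add_one_mul_choose_add_two N (N + 6)
    rw [show N + (N + 6) = 2 * N + 6 by ring] at hlarge
    refine Nat.le_of_mul_le_mul_left ?_ (show 0 < (N + 1) * (N + 7) by positivity)
    calc (N + 1) * (N + 7) * (3 ^ (N + 1) * (N + 1 + 2).choose (N + 1))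
        = 3 * (N + 7) * (3 ^ N * ((N + 3).choose (N + 1) * (N + 1))) := by ring
      _ = 3 * (N + 3) * (N + 7) * (3 ^ N * (N + 2).choose N) := by rw [← hsmall]; ring
      _ ≤ (2 * N + 8) * (2 * N + 7) * (2 * N + 6).choose N :=
        Nat.mul_le_mul (by nlinarith) ih
      _ = (N + 1) * (N + 7) * (2 * (N + 1) + 6).choose (N + 1) := by
        rw [show 2 * (N + 1) + 6 = 2 * N + 6 + 2 by ring, ← hlarge]
end

section
/- Let N ≥ 3 be an integer, let k ≥ 5 be an integer, let ε be a real number with 0 ≤ ε < 1, and let m ≥ 1 be an integer. If k ≥ (1+ε)·2m/(N−1) + 1 + ε, then C((k−1)(m+N−1)+N−1, N) ≥ (k+ε)^N · C(m+N−1, N), where the left binomial coefficient is an integer binomial coefficient and the inequality is as real numbers (interpreting C(m+N−1, N) as a real number). -/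
/-!
Up to the common factor `N!`, both binomial coefficients are falling factorials `∏_{j<N} (a - j)`.
Pair the factor `j` with the factor `N - 1 - j`: each pair of the larger factorial dominates
`(k + ε)²` times the corresponding pair of the smaller one, the middle pair being the tightest,
and for the middle pair this is exactly the hypothesis on `k`.
-/

open Finset

theorem sq_prod_range_eq_prod_mul_reflect {R : Type*} [CommMonoid R] (f : ℕ → R) (n : ℕ) :
    (∏ j ∈ range n, f j) ^ 2 = ∏ j ∈ range n, f j * f (n - 1 - j) := by
  rw [prod_mul_distrib, prod_range_reflect, sq]

/-- As `(L - x) (L - (s - x)) = (L - s/2)² - (s/2 - x)²` and `c ≥ 1`,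
the worst case is the middle `x = s/2`. -/
theorem sq_mul_mul_sub_le {c L M s x : ℝ} (hc : 1 ≤ c) (hM : 0 ≤ M - s / 2)
    (hLM : c * (M - s / 2) ≤ L - s / 2) :
    c ^ 2 * ((M - x) * (M - (s - x))) ≤ (L - x) * (L - (s - x)) := by
  have hsq : (c * (M - s / 2)) ^ 2 ≤ (L - s / 2) ^ 2 :=
    pow_le_pow_left₀ (mul_nonneg (by linarith) hM) hLM 2
  have hmid : 0 ≤ (c ^ 2 - 1) * (s / 2 - x) ^ 2 := mul_nonneg (by nlinarith) (sq_nonneg _)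
  linear_combination hsq + hmid

theorem pow_mul_prod_range_sub_le {c L M : ℝ} {n : ℕ} (hc : 1 ≤ c) (hM : (n : ℝ) - 1 ≤ M)
    (hLM : c * (M - (n - 1) / 2) ≤ L - (n - 1) / 2) :
    c ^ n * ∏ j ∈ range n, (M - j) ≤ ∏ j ∈ range n, (L - j) := by
  have hj_le : ∀ j ∈ range n, (j : ℝ) ≤ n - 1 := fun j hj => by
    have : (j : ℝ) + 1 ≤ n := by exact_mod_cast mem_range.mp hj
    linarith
  have reflect : ∀ j ∈ range n, ((n - 1 - j : ℕ) : ℝ) = (n - 1 : ℝ) - j := fun j hj => by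
    have := mem_range.mp hj
    rw [Nat.cast_sub (by omega), Nat.cast_sub (by omega)]
    simp
  have hsq : (c ^ n * ∏ j ∈ range n, (M - j)) ^ 2 ≤ (∏ j ∈ range n, (L - j)) ^ 2 := by
    have hpow : (c ^ n) ^ 2 = ∏ _j ∈ range n, c ^ 2 := by simp [← pow_mul, mul_comm]
    rw [mul_pow, hpow, sq_prod_range_eq_prod_mul_reflect,
      sq_prod_range_eq_prod_mul_reflect (fun j : ℕ => L - j), ← prod_mul_distrib]
    refine prod_le_prod (fun j hj => ?_) (fun j hj => ?_)
    · have := hj_le j hj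
      rw [reflect j hj]
      exact mul_nonneg (sq_nonneg c) (mul_nonneg (by linarith) (by linarith))
    · rw [reflect j hj]
      exact sq_mul_mul_sub_le hc (by linarith [hj_le j hj]) hLM
  refine (pow_le_pow_iff_left₀ ?_ ?_ two_ne_zero).mp hsq
  · exact mul_nonneg (by positivity) (prod_nonneg fun j hj => by linarith [hj_le j hj])
  · refine prod_nonneg fun j hj => ?_
    have := hj_le j hj
    nlinarith

theorem pow_mul_choose_le_choose {c : ℝ} {n M L : ℕ} (hc : 1 ≤ c)
    (hLM : c * (M - (n - 1) / 2) ≤ L - (n - 1) / 2) :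
    c ^ n * M.choose n ≤ L.choose n := by
  rcases lt_or_ge M n with hMn | hnM
  · simp [Nat.choose_eq_zero_of_lt hMn]
  have hM : (n : ℝ) - 1 ≤ M := by
    have : (n : ℝ) ≤ M := by exact_mod_cast hnM
    linarith
  simp only [Nat.cast_choose_eq_descPochhammer_div, descPochhammer_eval_eq_prod_range,
    ← mul_div_assoc]
  exact div_le_div_of_nonneg_right (pow_mul_prod_range_sub_le hc hM hLM) (by positivity)

theorem stmt_5_general (N k m : ℕ) (hN : 3 ≤ N)
    (ε : ℝ) (hε0 : 0 ≤ ε)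
    (hkε : (k : ℝ) ≥ (1 + ε) * (2 * m) / (N - 1) + 1 + ε) :
    (Nat.choose ((k - 1) * (m + N - 1) + N - 1) N : ℝ) ≥
      (k + ε) ^ N * (Nat.choose (m + N - 1) N : ℝ) := by
  have hN1 : (2 : ℝ) ≤ N - 1 := by
    have : (3 : ℝ) ≤ N := by exact_mod_cast hN
    linarith
  have hkey : (1 + ε) * (2 * m) ≤ (k - 1 - ε) * (N - 1) :=
    (div_le_iff₀ (by linarith)).mp (by linarith)
  have hk : (1 : ℝ) + ε ≤ k := by
    nlinarith [mul_nonneg (by linarith : (0 : ℝ) ≤ 1 + ε) m.cast_nonneg]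
  have hk1 : 1 ≤ k := by exact_mod_cast (by linarith : (1 : ℝ) ≤ k)
  have hM : ((m + N - 1 : ℕ) : ℝ) = m + (N - 1) := by
    rw [Nat.cast_sub (by omega)]; push_cast; ring
  have hL : (((k - 1) * (m + N - 1) + N - 1 : ℕ) : ℝ) = (k - 1) * (m + (N - 1)) + (N - 1) := by
    rw [Nat.cast_sub (by omega), Nat.cast_add, Nat.cast_mul, hM, Nat.cast_sub hk1]; push_cast; ring
  refine pow_mul_choose_le_choose (by linarith) ?_
  rw [hM, hL]
  linear_combination hkey / 2

theorem stmt_5 (N k m : ℕ) (hN : 3 ≤ N) (hk : 5 ≤ k) (hm : 1 ≤ m)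
    (ε : ℝ) (hε0 : 0 ≤ ε) (hε1 : ε < 1)
    (hkε : (k : ℝ) ≥ (1 + ε) * (2 * m) / (N - 1) + 1 + ε) :
    (Nat.choose ((k - 1) * (m + N - 1) + N - 1) N : ℝ) ≥
      (k + ε) ^ N * (Nat.choose (m + N - 1) N : ℝ) :=
  stmt_5_general N k m hN ε hε0 hkε
end

section
/- Let N ≥ 3 and ℓ ≥ 5 be integers with ℓ ≤ (5 + √(8N+17))/2. Then (N+1)·C(N+ℓ, N) ≥ C(N+2, N)·C(N+ℓ−2, N). -/
/-!
Since `C(N+ℓ, N) / C(N+ℓ-2, N) = (N+ℓ)(N+ℓ-1) / (ℓ(ℓ-1))` and `C(N+2, N) = (N+2)(N+1)/2`, the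
inequality is equivalent to `(N+2) ℓ(ℓ-1) ≤ 2 (N+ℓ)(N+ℓ-1)`, which expands to
`ℓ² - 5ℓ + 2 ≤ 2N`. For `ℓ ≥ 3` this is exactly `(2ℓ - 5)² ≤ 8N + 17`, i.e. the bound on `ℓ`.
-/

theorem Nat.choose_add_two_mul (n a : ℕ) :
    (n + a + 2).choose n * ((a + 2) * (a + 1)) =
      (n + a).choose n * ((n + a + 2) * (n + a + 1)) := by
  have step (m : ℕ) : (n + m + 1).choose n * (m + 1) = (n + m).choose n * (n + m + 1) := by
    rw [Nat.choose_mul_succ_eq]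
    congr 1
    omega
  calc (n + a + 2).choose n * ((a + 2) * (a + 1))
      = (n + (a + 1) + 1).choose n * (a + 1 + 1) * (a + 1) := by ring_nf
    _ = (n + a + 1).choose n * (a + 1) * (n + a + 2) := by rw [step]; ring_nf
    _ = (n + a).choose n * ((n + a + 2) * (n + a + 1)) := by rw [step]; ring

theorem Nat.choose_two_mul_choose_sub_two_le (n ℓ : ℕ) (hℓ : 2 ≤ ℓ)
    (h : ℓ * ℓ + 2 ≤ 5 * ℓ + 2 * n) :
    (n + 2).choose n * (n + ℓ - 2).choose n ≤ (n + 1) * (n + ℓ).choose n := by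
  obtain ⟨a, rfl⟩ : ∃ a, ℓ = a + 2 := ⟨ℓ - 2, by omega⟩
  rw [show n + (a + 2) - 2 = n + a by omega, ← add_assoc]
  have h_top : (n + 2).choose n * 2 = (n + 2) * (n + 1) := by
    simpa using Nat.choose_add_two_mul n 0
  have h_ratio : (n + 2) * ((a + 2) * (a + 1)) ≤ 2 * ((n + a + 2) * (n + a + 1)) := by
    nlinarith
  refine Nat.le_of_mul_le_mul_right ?_ (show 0 < 2 * ((a + 2) * (a + 1)) by positivity)
  calc (n + 2).choose n * (n + a).choose n * (2 * ((a + 2) * (a + 1)))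
      = (n + 2).choose n * 2 * ((n + a).choose n * ((a + 2) * (a + 1))) := by ring
    _ = (n + 1) * (n + a).choose n * ((n + 2) * ((a + 2) * (a + 1))) := by rw [h_top]; ring
    _ ≤ (n + 1) * (n + a).choose n * (2 * ((n + a + 2) * (n + a + 1))) := by gcongr
    _ = 2 * (n + 1) * ((n + a).choose n * ((n + a + 2) * (n + a + 1))) := by ring
    _ = (n + 1) * (n + a + 2).choose n * (2 * ((a + 2) * (a + 1))) := by
        rw [← Nat.choose_add_two_mul]; ring

theorem sq_add_two_le_of_le_half_add_sqrt (n ℓ : ℕ) (hℓ : 3 ≤ ℓ)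
    (h : (ℓ : ℝ) ≤ (5 + Real.sqrt (8 * n + 17)) / 2) : ℓ * ℓ + 2 ≤ 5 * ℓ + 2 * n := by
  have hℓ' : (3 : ℝ) ≤ ℓ := by exact_mod_cast hℓ
  have h_sq := Real.sq_sqrt (show (0 : ℝ) ≤ 8 * n + 17 by positivity)
  have h_center : (2 * ℓ - 5 : ℝ) ^ 2 ≤ 8 * n + 17 := by
    rw [← h_sq]
    exact pow_le_pow_left₀ (by linarith) (by linarith) 2
  exact_mod_cast (show (ℓ * ℓ + 2 : ℝ) ≤ 5 * ℓ + 2 * n by nlinarith)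

theorem stmt_8_general (N ℓ : ℕ) (hℓ : 5 ≤ ℓ)
    (hub : (ℓ : ℝ) ≤ (5 + Real.sqrt (8 * N + 17)) / 2) :
    (N + 1) * Nat.choose (N + ℓ) N ≥
      Nat.choose (N + 2) N * Nat.choose (N + ℓ - 2) N :=
  Nat.choose_two_mul_choose_sub_two_le N ℓ (by omega)
    (sq_add_two_le_of_le_half_add_sqrt N ℓ (by omega) hub)

theorem stmt_8 (N ℓ : ℕ) (hN : 3 ≤ N) (hℓ : 5 ≤ ℓ)
    (hub : (ℓ : ℝ) ≤ (5 + Real.sqrt (8 * N + 17)) / 2) :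
    (N + 1) * Nat.choose (N + ℓ) N ≥
      Nat.choose (N + 2) N * Nat.choose (N + ℓ - 2) N :=
  stmt_8_general N ℓ hℓ hub
end

section
/- Let N ≥ 8 be an integer and set ℓ₀ = ⌈(5+√(8N+17))/2⌉ + 1. Then (N+ℓ₀−2)!/(ℓ₀!·(N+2)!) · (ℓ₀² − 5ℓ₀ − (2N−2)) ≥ 1/2. -/
/-!
Write `s = √(8N + 17)`. From `ℓ₀ - 1 ≥ (5 + s)/2`, squaring `2ℓ₀ - 7 ≥ s` gives `2N ≤ ℓ₀² - 7ℓ₀ + 8`,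
so the quadratic factor is at least `2(ℓ₀ - 3)`; and `ℓ₀ < (9 + s)/2 ≤ s ≤ N + 3`.
With `ℓ₀ = k + 4` and `M = N + 2` the factorial quotient is `C(M + k, k) / ((k + 1)⋯(k + 4))`, so the
claim reduces to `(k + 2)(k + 3)(k + 4) ≤ 4 C(M + k, k)`. This follows from
`C(M + k, k) ≥ C(M + 4, 4) = (M + 1)⋯(M + 4)/24`, valid as `4 ≤ k < M`.
-/

open Nat

lemma ascFactorial_four_le_mul_choose {k M : ℕ} (hk : 4 ≤ k) (hkM : k < M) :
    (k + 1).ascFactorial 4 ≤ 4 * (k + 1) * (M + k).choose k := by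
  have hchoose : (M + 4).choose 4 ≤ (M + k).choose k := by
    rw [← choose_symm_add, ← choose_symm_add (a := M)]
    exact choose_le_choose M (by omega)
  have hM : (M + 1).ascFactorial 4 = 24 * (M + 4).choose 4 := by
    rw [ascFactorial_eq_factorial_mul_choose]; rfl
  simp only [ascFactorial_succ, ascFactorial_zero] at hM ⊢
  have hpoly : 6 * ((k + 2) * (k + 3) * (k + 4)) ≤ (M + 1) * (M + 2) * (M + 3) * (M + 4) := by
    calc 6 * ((k + 2) * (k + 3) * (k + 4))
        ≤ (M + 1) * ((M + 2) * (M + 3) * (M + 4)) := by gcongr; omega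
      _ = (M + 1) * (M + 2) * (M + 3) * (M + 4) := by ring
  nlinarith

lemma factorial_add_four_mul_factorial_le {k M : ℕ} (hk : 4 ≤ k) (hkM : k < M) :
    (k + 4)! * M ! ≤ 4 * (k + 1) * (M + k)! := by
  rw [← factorial_mul_ascFactorial, ← add_choose_mul_factorial_mul_factorial M k]
  calc k ! * (k + 1).ascFactorial 4 * M !
      = (k + 1).ascFactorial 4 * (M ! * k !) := by ring
    _ ≤ 4 * (k + 1) * (M + k).choose k * (M ! * k !) := by
      gcongr; exact ascFactorial_four_le_mul_choose hk hkM
    _ = 4 * (k + 1) * ((M + k).choose k * M ! * k !) := by ring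

lemma sqrt_bounds_of_eq_ceil {N ℓ : ℕ} (hℓ : ℓ = ⌈(5 + √(8 * N + 17)) / 2⌉₊ + 1) :
    √(8 * N + 17) + 7 ≤ 2 * ℓ ∧ 2 * ℓ < √(8 * N + 17) + 9 := by
  have hpos : 0 ≤ (5 + √(8 * N + 17)) / 2 := by positivity
  have hle := Nat.le_ceil ((5 + √(8 * N + 17)) / 2)
  have hlt := Nat.ceil_lt_add_one hpos
  subst hℓ
  push_cast
  constructor <;> linarith

lemma two_mul_sub_three_le_quadratic_of_eq_ceil {N ℓ : ℕ}
    (hℓ : ℓ = ⌈(5 + √(8 * N + 17)) / 2⌉₊ + 1) :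
    2 * ((ℓ : ℝ) - 3) ≤ (ℓ : ℝ) ^ 2 - 5 * ℓ - (2 * N - 2) := by
  obtain ⟨hlow, -⟩ := sqrt_bounds_of_eq_ceil hℓ
  have hs := Real.sq_sqrt (by positivity : (0 : ℝ) ≤ 8 * N + 17)
  have hsq := mul_self_le_mul_self (Real.sqrt_nonneg (8 * N + 17))
    (by linarith : √(8 * N + 17) ≤ 2 * ℓ - 7)
  nlinarith

lemma eight_le_and_le_add_three_of_eq_ceil {N ℓ : ℕ} (hℓ : ℓ = ⌈(5 + √(8 * N + 17)) / 2⌉₊ + 1)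
    (hN : 8 ≤ N) : 8 ≤ ℓ ∧ ℓ ≤ N + 3 := by
  obtain ⟨hlow, hhigh⟩ := sqrt_bounds_of_eq_ceil hℓ
  have hNr : (8 : ℝ) ≤ N := by exact_mod_cast hN
  have hs := Real.sq_sqrt (by positivity : (0 : ℝ) ≤ 8 * N + 17)
  have hs0 := Real.sqrt_nonneg (8 * N + 17)
  have hs9 : 9 ≤ √(8 * N + 17) := by nlinarith
  have hsN : √(8 * N + 17) ≤ N + 3 := by nlinarith
  constructor
  · exact_mod_cast (by linarith : (8 : ℝ) ≤ ℓ)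
  · exact_mod_cast (by linarith : (ℓ : ℝ) ≤ N + 3)

theorem stmt_10 (N : ℕ) (hN : 8 ≤ N)
    (ℓ₀ : ℕ) (hℓ₀ : ℓ₀ = ⌈(5 + Real.sqrt (8 * N + 17)) / 2⌉₊ + 1) :
    (Nat.factorial (N + ℓ₀ - 2) : ℝ) /
        (Nat.factorial ℓ₀ * Nat.factorial (N + 2)) *
        ((ℓ₀ : ℝ) ^ 2 - 5 * ℓ₀ - (2 * N - 2)) ≥ 1 / 2 := by
  have hquad := two_mul_sub_three_le_quadratic_of_eq_ceil hℓ₀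
  obtain ⟨h8, hle⟩ := eight_le_and_le_add_three_of_eq_ceil hℓ₀ hN
  obtain ⟨k, rfl⟩ : ∃ k, ℓ₀ = k + 4 := ⟨ℓ₀ - 4, by omega⟩
  have hfact : ((k + 4)! * (N + 2)! : ℝ) ≤ 4 * (k + 1) * (N + (k + 4) - 2)! := by
    rw [show N + (k + 4) - 2 = N + 2 + k by omega]
    exact_mod_cast factorial_add_four_mul_factorial_le (by omega) (by omega)
  calc (1 : ℝ) / 2
      ≤ (N + (k + 4) - 2)! / ((k + 4)! * (N + 2)!) * (2 * (((k + 4 : ℕ) : ℝ) - 3)) := by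
        rw [div_mul_eq_mul_div, le_div_iff₀ (by positivity)]
        push_cast
        linarith
    _ ≤ _ := by gcongr
end

section
/- Let N ≥ 8 be an integer and ℓ ≥ (5+√(8N+17))/2 + 1 an integer. Then C(N+ℓ, N)/C(N+2, N) ≥ C(N−1+ℓ, N−1)/C(N+1, N−1) + C(N+ℓ−2, N−1)/C(N+1, N−1) + 1, as real numbers. -/
/-!
Pascal's rule expresses both binomials on the right through `A = C(N+ℓ, N)`, so the difference of
the two sides is `2A(ℓ² - 5ℓ - 2N + 2) / ((N+1)(N+2)(N+ℓ)(N+ℓ-1)) - 1`. The hypothesis on `ℓ` says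
`ℓ² - 7ℓ + 8 ≥ 2N`, so `ℓ² - 5ℓ - 2N + 2 ≥ 2ℓ - 6 ≥ 10`, and unimodality gives
`A ≥ C(N+ℓ, 5)`, a quintic in `N + ℓ` that beats the quartic denominator.
-/

open Real

theorem Nat.choose_le_choose_of_le_of_le_half {n j k : ℕ} (hjk : j ≤ k) (hk : k ≤ n / 2) :
    n.choose j ≤ n.choose k := by
  induction k, hjk using Nat.le_induction with
  | base => rfl
  | succ k _ ih => exact (ih (by omega)).trans (Nat.choose_le_succ_of_lt_half_left (by omega))

theorem Nat.choose_le_choose_add_left {a b k : ℕ} (ha : k ≤ a) (hb : k ≤ b) :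
    (a + b).choose k ≤ (a + b).choose a := by
  rcases le_total a b with hab | hba
  · exact Nat.choose_le_choose_of_le_of_le_half ha (by omega)
  · rw [Nat.choose_symm_add]
    exact Nat.choose_le_choose_of_le_of_le_half hb (by omega)

theorem Nat.cast_choose_five {K : Type*} [Field K] [CharZero K] (n : ℕ) :
    (n.choose 5 : K) = n * (n - 1) * (n - 2) * (n - 3) * (n - 4) / 120 := by
  rcases lt_or_ge n 5 with hn | hn
  · interval_cases n <;> simp [Nat.choose_eq_zero_of_lt]
  · obtain ⟨m, rfl⟩ : ∃ m, n = m + 5 := ⟨n - 5, by omega⟩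
    have h := congrArg (Nat.cast : ℕ → K) (Nat.descFactorial_eq_factorial_mul_choose (m + 5) 5)
    simp only [Nat.descFactorial_succ, Nat.descFactorial_zero, Nat.factorial] at h
    push_cast [Nat.add_sub_cancel] at h
    rw [eq_div_iff (by norm_num)]
    push_cast
    linear_combination -h

theorem Nat.cast_choose_add_two_self {K : Type*} [Field K] [CharZero K] (n : ℕ) :
    ((n + 2).choose n : K) = (n + 1) * (n + 2) / 2 := by
  rw [Nat.choose_symm_add, Nat.cast_choose_two]
  push_cast
  ring

theorem choose_ratio_gap {N ℓ : ℕ} (hN : 1 ≤ N) (hℓ : 1 ≤ ℓ) :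
    (N + ℓ).choose N / ((N + 2).choose N : ℝ) -
        ((N - 1 + ℓ).choose (N - 1) / ((N + 1).choose (N - 1) : ℝ) +
          (N + ℓ - 2).choose (N - 1) / ((N + 1).choose (N - 1) : ℝ)) =
      2 * (N + ℓ).choose N * ((ℓ : ℝ) ^ 2 - 5 * ℓ - 2 * N + 2) /
        ((N + 1) * (N + 2) * (N + ℓ) * (N + ℓ - 1)) := by
  obtain ⟨n, rfl⟩ : ∃ n, N = n + 1 := ⟨N - 1, by omega⟩
  obtain ⟨l, rfl⟩ : ∃ l, ℓ = l + 1 := ⟨ℓ - 1, by omega⟩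
  have hB := Nat.add_one_mul_choose_eq (n + l + 1) n
  have hC := Nat.choose_mul_succ_eq (n + l) n
  rw [show n + l + 1 - n = l + 1 by omega] at hC
  rw [show n + 1 + (l + 1) - 2 = n + l by omega, show n + 1 - 1 = n by omega,
    show n + (l + 1) = n + l + 1 by omega, show n + 1 + (l + 1) = n + l + 1 + 1 by omega,
    show n + 1 + 1 = n + 2 by omega, Nat.cast_choose_add_two_self, Nat.cast_choose_add_two_self]
  set A := (n + l + 1 + 1).choose (n + 1)
  set B := (n + l + 1).choose n
  set C := (n + l).choose n
  have hB' : (B : ℝ) = A * (n + 1) / (n + l + 2) := by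
    rw [eq_div_iff (by positivity)]
    linear_combination (by exact_mod_cast hB : ((n : ℝ) + l + 1 + 1) * B = A * (n + 1))
  have hC' : (C : ℝ) = B * (l + 1) / (n + l + 1) := by
    rw [eq_div_iff (by positivity)]
    exact_mod_cast hC
  rw [hC', hB']
  have hden : (n : ℝ) + 1 + (l + 1) - 1 ≠ 0 := by ring_nf; positivity
  push_cast
  field_simp
  ring

theorem one_le_two_mul_div_of_quintic_le {x y A : ℝ} (hx : 2 ≤ x) (hy : 8 ≤ y)
    (hxy : 8 * x + 17 ≤ (2 * y - 7) ^ 2)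
    (hA : (x + y) * (x + y - 1) * (x + y - 2) * (x + y - 3) * (x + y - 4) / 120 ≤ A) :
    1 ≤ 2 * A * (y ^ 2 - 5 * y - 2 * x + 2) / ((x + 1) * (x + 2) * (x + y) * (x + y - 1)) := by
  have hQ : 10 ≤ y ^ 2 - 5 * y - 2 * x + 2 := by nlinarith
  have hX : 6 * ((x + 1) * (x + 2)) ≤ (x + y - 4) * ((x + y - 2) * (x + y - 3)) := by
    gcongr <;> linarith
  have hs : 0 < x + y - 1 := by linarith
  rw [one_le_div (by positivity)]
  calc (x + 1) * (x + 2) * (x + y) * (x + y - 1)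
      ≤ (x + y) * (x + y - 1) * ((x + y - 4) * ((x + y - 2) * (x + y - 3)) / 6) := by
        nlinarith [mul_pos (by linarith : 0 < x + y) hs]
    _ = 2 * ((x + y) * (x + y - 1) * (x + y - 2) * (x + y - 3) * (x + y - 4) / 120) * 10 := by ring
    _ ≤ 2 * A * (y ^ 2 - 5 * y - 2 * x + 2) := by
        have hA0 : 0 ≤ A :=
          (div_nonneg (by apply_rules [mul_nonneg] <;> linarith) (by norm_num)).trans hA
        gcongr

theorem stmt_11 (N ℓ : ℕ) (hN : 8 ≤ N)
    (hℓ : (ℓ : ℝ) ≥ (5 + Real.sqrt (8 * N + 17)) / 2 + 1) :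
    (Nat.choose (N + ℓ) N : ℝ) / Nat.choose (N + 2) N ≥
      (Nat.choose (N - 1 + ℓ) (N - 1) : ℝ) / Nat.choose (N + 1) (N - 1) +
      (Nat.choose (N + ℓ - 2) (N - 1) : ℝ) / Nat.choose (N + 1) (N - 1) + 1 := by
  have hN8 : (8 : ℝ) ≤ N := by exact_mod_cast hN
  have hsqrt : (9 : ℝ) ≤ √(8 * N + 17) := le_sqrt_of_sq_le (by linarith)
  have hℓ8 : 8 ≤ ℓ := by exact_mod_cast (by linarith : (8 : ℝ) ≤ ℓ)
  have hquad : 8 * (N : ℝ) + 17 ≤ (2 * ℓ - 7) ^ 2 := (sqrt_le_iff.mp (by linarith)).2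
  have hA : ((N + ℓ : ℕ) : ℝ) * ((N + ℓ : ℕ) - 1) * ((N + ℓ : ℕ) - 2) * ((N + ℓ : ℕ) - 3) *
      ((N + ℓ : ℕ) - 4) / 120 ≤ (N + ℓ).choose N := by
    rw [← Nat.cast_choose_five]
    exact_mod_cast Nat.choose_le_choose_add_left (by omega) (by omega)
  push_cast at hA
  have hgap := choose_ratio_gap (N := N) (ℓ := ℓ) (by omega) (by omega)
  linarith [one_le_two_mul_div_of_quintic_le (by linarith) (by exact_mod_cast hℓ8) hquad hA]
end
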